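/- Let K ⊂ ℝ² be a convex body whose boundary contains no pair of parallel segments lying in distinct parallel supporting lines. Then for every direction angle α ∈ [0, 2π) there is exactly one oriented affine diameter of K whose direction vector is a positive multiple of (cos α, sin α), and this affine diameter depends continuously on α. -/

import Mathlib

open scoped Pointwise

noncomputable section

def suppSet (L : Set (EuclideanSpace ℝ (Fin 2))) (u : EuclideanSpace ℝ (Fin 2)) :
    Set (EuclideanSpace ℝ (Fin 2)) :=
  {x ∈ L | ∀ y ∈ L, inner ℝ u y ≤ (inner ℝ u x : ℝ)}

def adim (s : Set (EuclideanSpace ℝ (Fin 2))) : ℕ :=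
  Module.finrank ℝ (affineSpan ℝ s).direction

/-- An oriented affine diameter of `K`: an ordered pair of points of `K` lying in
distinct parallel supporting lines, oriented from `a` to `a₁`. -/
def IsOrientedAffDiam (K : Set (EuclideanSpace ℝ (Fin 2))) (a a₁ : EuclideanSpace ℝ (Fin 2)) :
    Prop :=
  a ∈ K ∧ a₁ ∈ K ∧ ∃ u : EuclideanSpace ℝ (Fin 2), ‖u‖ = 1 ∧
    (∀ z ∈ K, inner ℝ u z ≤ (inner ℝ u a₁ : ℝ)) ∧
    (∀ z ∈ K, (inner ℝ u a : ℝ) ≤ inner ℝ u z) ∧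
    (inner ℝ u a : ℝ) < inner ℝ u a₁

/-!
A longest chord `[a, b]` of `K` in direction `v` is an affine diameter: if `b - a = ℓ • v` with
`ℓ` maximal, then `ℓ • v` lies on the boundary of the convex body `K - K`, and a functional
supporting `K - K` there is maximised over `K` at `b` and minimised at `a`. Conversely every
oriented diameter in direction `v` is a longest chord, so two of them are translates of each other
lying on the same pair of supporting lines; unless they coincide they would span two parallel
boundary segments. Finally, limits of oriented diameters are oriented diameters (pass to a
convergent subsequence of unit normals), so the diameter map has closed graph and values in the
compact set `K ×ˢ K`, hence is continuous.
-/

open Set Filter Topology RealInnerProductSpace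

theorem IsCompact.continuous_of_isClosed_graph {X Y : Type*} [TopologicalSpace X]
    [TopologicalSpace Y] {f : X → Y} {s : Set Y} (hs : IsCompact s) (hfs : ∀ x, f x ∈ s)
    (hf : IsClosed {q : X × Y | q.2 = f q.1}) : Continuous f := by
  refine continuous_iff_continuousAt.2 fun x ↦
    hs.tendsto_nhds_of_unique_mapClusterPt (.of_forall hfs) fun y _ hy ↦ ?_
  have hxy : MapClusterPt (x, y) (𝓝 x) fun z ↦ (z, f z) := by
    rw [((𝓝 x).basis_sets.prod_nhds (𝓝 y).basis_sets).mapClusterPt_iff_frequently]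
    rintro ⟨U, V⟩ ⟨hU, hV⟩
    exact ((mapClusterPt_iff_frequently.1 hy V hV).and_eventually hU).mono fun z hz ↦ ⟨hz.2, hz.1⟩
  exact hf.mem_of_mapClusterPt hxy (.of_forall fun _ ↦ rfl)

section NormedSpace

variable {E : Type*} [NormedAddCommGroup E] [NormedSpace ℝ E]

theorem ContinuousLinearMap.lt_of_mem_interior {f : StrongDual ℝ E} (hf : f ≠ 0) {s : Set E}
    {m : ℝ} (h : ∀ z ∈ s, f z ≤ m) {x : E} (hx : x ∈ interior s) : f x < m := by
  have hsub : f '' interior s ⊆ interior (Iic m) :=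
    interior_maximal (image_subset_iff.2 fun z hz ↦ h z (interior_subset hz))
      (f.isOpenMap_of_ne_zero hf _ isOpen_interior)
  simpa using hsub (mem_image_of_mem f hx)

theorem exists_pos_smul_mem_notMem_interior {S : Set E} (hS : IsCompact S)
    (h0 : (0 : E) ∈ interior S) {v : E} (hv : v ≠ 0) :
    ∃ ℓ : ℝ, 0 < ℓ ∧ ℓ • v ∈ S ∧ ℓ • v ∉ interior S := by
  have hT : IsCompact ((· • v) ⁻¹' S : Set ℝ) :=
    (isClosedEmbedding_smul_left hv).isCompact_preimage hS
  obtain ⟨ℓ, hℓS, hℓmax⟩ := hT.exists_isGreatest ⟨0, by simpa using interior_subset h0⟩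
  have hnot : ℓ • v ∉ interior S := fun hℓ ↦ by
    have hint : ∀ᶠ t in 𝓝 ℓ, t • v ∈ S := mem_interior_iff_mem_nhds.1 <|
      preimage_interior_subset_interior_preimage (continuous_id.smul continuous_const) hℓ
    obtain ⟨t, hℓt, htS⟩ := hint.exists_gt
    exact (hℓmax htS).not_gt hℓt
  have hℓ0 : ℓ ≠ 0 := by
    rintro rfl
    exact hnot (by simpa using h0)
  exact ⟨ℓ, (hℓmax (by simpa using interior_subset h0)).lt_of_ne' hℓ0, hℓS, hnot⟩

end NormedSpace

section Plane

local notation "ℝ²" => EuclideanSpace ℝ (Fin 2)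

def IsOrientedAffDiamIn (K : Set ℝ²) (v : ℝ²) (p : ℝ² × ℝ²) : Prop :=
  IsOrientedAffDiam K p.1 p.2 ∧ ∃ c : ℝ, 0 < c ∧ p.2 - p.1 = c • v

variable {K : Set ℝ²}

theorem one_le_adim {s : Set ℝ²} {x y : ℝ²} (hx : x ∈ s) (hy : y ∈ s) (hxy : x ≠ y) :
    1 ≤ adim s := by
  rw [Nat.one_le_iff_ne_zero, adim, direction_affineSpan, Ne, Submodule.finrank_eq_zero,
    vectorSpan_eq_bot_iff_subsingleton]
  exact fun h ↦ hxy (h hx hy)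

theorem isOrientedAffDiam_of_dual (f : StrongDual ℝ ℝ²) {a b : ℝ²} (ha : a ∈ K) (hb : b ∈ K)
    (hmax : ∀ z ∈ K, f z ≤ f b) (hmin : ∀ z ∈ K, f a ≤ f z) (hlt : f a < f b) :
    IsOrientedAffDiam K a b := by
  set u := (InnerProductSpace.toDual ℝ ℝ²).symm f
  have hu : u ≠ 0 := fun hu ↦ by
    rw [LinearIsometryEquiv.map_eq_zero_iff] at hu
    simp [hu] at hlt
  have hscale : ∀ z, ⟪‖u‖⁻¹ • u, z⟫ = ‖u‖⁻¹ * f z := fun z ↦ by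
    rw [real_inner_smul_left, InnerProductSpace.toDual_symm_apply]
  have hpos : 0 < ‖u‖⁻¹ := inv_pos.2 (norm_pos_iff.2 hu)
  refine ⟨ha, hb, ‖u‖⁻¹ • u, norm_smul_inv_norm hu, fun z hz ↦ ?_, fun z hz ↦ ?_, ?_⟩ <;>
    simp only [hscale]
  · exact mul_le_mul_of_nonneg_left (hmax z hz) hpos.le
  · exact mul_le_mul_of_nonneg_left (hmin z hz) hpos.le
  · exact mul_lt_mul_of_pos_left hlt hpos

theorem exists_isOrientedAffDiamIn (hKc : IsCompact K) (hKconv : Convex ℝ K)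
    (hKint : (interior K).Nonempty) {v : ℝ²} (hv : v ≠ 0) :
    ∃ p, IsOrientedAffDiamIn K v p := by
  obtain ⟨x₀, hx₀⟩ := hKint
  have h0 : (0 : ℝ²) ∈ interior (K - K) := by
    simpa using subset_interior_sub_left (sub_mem_sub hx₀ (interior_subset hx₀))
  have hKK : IsCompact (K - K) := sub_image_prod (s := K) (t := K) ▸
    (hKc.prod hKc).image continuous_sub
  obtain ⟨ℓ, hℓ, hℓK, hℓint⟩ := exists_pos_smul_mem_notMem_interior hKK h0 hv
  obtain ⟨f, hf, hfmax⟩ :=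
    geometric_hahn_banach_of_nonempty_interior_point (hKconv.sub hKconv) hℓint ⟨0, h0⟩
  have hfpos : f 0 < f (ℓ • v) := f.lt_of_mem_interior hf hfmax h0
  obtain ⟨b, hb, a, ha, hab⟩ := hℓK
  simp only [← hab, map_sub, map_zero, sub_pos] at hfmax hfpos
  refine ⟨(a, b), isOrientedAffDiam_of_dual f ha hb (fun z hz ↦ ?_) (fun z hz ↦ ?_) hfpos,
    ℓ, hℓ, hab⟩
  · simpa [map_sub] using hfmax _ (sub_mem_sub hz ha)
  · linarith [show f b - f z ≤ f b - f a by simpa [map_sub] using hfmax _ (sub_mem_sub hb hz)]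

namespace IsOrientedAffDiam

variable {a a₁ : ℝ²}

theorem ne (h : IsOrientedAffDiam K a a₁) : a ≠ a₁ := by
  rintro rfl
  obtain ⟨-, -, u, -, -, -, hlt⟩ := h
  exact hlt.false

theorem le_of_sub_eq_smul (h : IsOrientedAffDiam K a a₁) {v : ℝ²} {c d : ℝ} (hc : 0 < c)
    (hcv : a₁ - a = c • v) {b b₁ : ℝ²} (hb : b ∈ K) (hb₁ : b₁ ∈ K) (hdv : b₁ - b = d • v) :
    d ≤ c := by
  obtain ⟨-, -, u, -, hmax, hmin, hlt⟩ := h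
  have hchord : ⟪u, b₁ - b⟫ ≤ ⟪u, a₁ - a⟫ := by
    simp only [inner_sub_right]
    linarith [hmax b₁ hb₁, hmin b hb]
  have hpos : 0 < ⟪u, a₁ - a⟫ := by rwa [inner_sub_right, sub_pos]
  rw [hcv, real_inner_smul_right] at hchord hpos
  rw [hdv, real_inner_smul_right] at hchord
  exact le_of_mul_le_mul_right hchord (pos_of_mul_pos_right hpos hc.le)

theorem eq_of_sub_eq (hnp : ∀ u : ℝ², ‖u‖ = 1 → adim (suppSet K u) + adim (suppSet K (-u)) ≤ 1)
    (h : IsOrientedAffDiam K a a₁) {b b₁ : ℝ²} (hb : b ∈ K) (hb₁ : b₁ ∈ K)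
    (hsub : b₁ - b = a₁ - a) : b = a := by
  obtain ⟨ha, ha₁, u, hu, hmax, hmin, -⟩ := h
  have hinner : ⟪u, b₁⟫ - ⟪u, b⟫ = ⟪u, a₁⟫ - ⟪u, a⟫ := by
    simp only [← inner_sub_right, hsub]
  have hb₁max : ⟪u, b₁⟫ = ⟪u, a₁⟫ := by linarith [hmax b₁ hb₁, hmin b hb]
  have hbmin : ⟪u, b⟫ = ⟪u, a⟫ := by linarith [hmax b₁ hb₁, hmin b hb]
  have htop : ∀ x ∈ K, ⟪u, x⟫ = ⟪u, a₁⟫ → x ∈ suppSet K u := fun x hx hxu ↦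
    ⟨hx, fun y hy ↦ hxu ▸ hmax y hy⟩
  have hbot : ∀ x ∈ K, ⟪u, x⟫ = ⟪u, a⟫ → x ∈ suppSet K (-u) := fun x hx hxu ↦
    ⟨hx, fun y hy ↦ by simpa only [inner_neg_left, neg_le_neg_iff, hxu] using hmin y hy⟩
  by_contra hba
  have hb₁a₁ : b₁ ≠ a₁ := fun h ↦ hba (by rw [h] at hsub; exact sub_right_injective hsub)
  have := one_le_adim (htop b₁ hb₁ hb₁max) (htop a₁ ha₁ rfl) hb₁a₁
  have := one_le_adim (hbot b hb hbmin) (hbot a ha rfl) hba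
  linarith [hnp u hu]

end IsOrientedAffDiam

theorem IsOrientedAffDiamIn.eq (hnp : ∀ u : ℝ², ‖u‖ = 1 →
      adim (suppSet K u) + adim (suppSet K (-u)) ≤ 1) {v : ℝ²} {p q : ℝ² × ℝ²}
    (hp : IsOrientedAffDiamIn K v p) (hq : IsOrientedAffDiamIn K v q) : p = q := by
  obtain ⟨hp, c, hc, hcv⟩ := hp
  obtain ⟨hq, d, hd, hdv⟩ := hq
  have hcd : c = d := le_antisymm (hq.le_of_sub_eq_smul hd hdv hp.1 hp.2.1 hcv)
    (hp.le_of_sub_eq_smul hc hcv hq.1 hq.2.1 hdv)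
  have hsub : q.2 - q.1 = p.2 - p.1 := by rw [hcv, hdv, hcd]
  have h₁ : q.1 = p.1 := hp.eq_of_sub_eq hnp hq.1 hq.2.1 hsub
  rw [h₁] at hsub
  exact (Prod.ext h₁ (sub_left_injective hsub)).symm

theorem isClosed_setOf_isOrientedAffDiam (hK : IsClosed K) (hKint : (interior K).Nonempty) :
    IsClosed {p : ℝ² × ℝ² | IsOrientedAffDiam K p.1 p.2} := by
  refine IsSeqClosed.isClosed fun p p₀ hp hlim ↦ ?_
  choose ha ha₁ u hu hmax hmin _ using hp
  obtain ⟨u₀, hu₀, φ, hφ, hu₀lim⟩ :=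
    (isCompact_sphere (0 : ℝ²) 1).tendsto_subseq (x := u) (by simpa using hu)
  have hlim₁ : Tendsto (fun n ↦ (p (φ n)).1) atTop (𝓝 p₀.1) :=
    (continuous_fst.tendsto p₀).comp (hlim.comp hφ.tendsto_atTop)
  have hlim₂ : Tendsto (fun n ↦ (p (φ n)).2) atTop (𝓝 p₀.2) :=
    (continuous_snd.tendsto p₀).comp (hlim.comp hφ.tendsto_atTop)
  have hmax₀ : ∀ z ∈ K, ⟪u₀, z⟫ ≤ ⟪u₀, p₀.2⟫ := fun z hz ↦
    le_of_tendsto_of_tendsto' (hu₀lim.inner tendsto_const_nhds) (hu₀lim.inner hlim₂)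
      fun n ↦ hmax (φ n) z hz
  have hmin₀ : ∀ z ∈ K, ⟪u₀, p₀.1⟫ ≤ ⟪u₀, z⟫ := fun z hz ↦
    le_of_tendsto_of_tendsto' (hu₀lim.inner hlim₁) (hu₀lim.inner tendsto_const_nhds)
      fun n ↦ hmin (φ n) z hz
  have hu₀ : ‖u₀‖ = 1 := by simpa using hu₀
  obtain ⟨x, hx⟩ := hKint
  have hlt : ⟪u₀, x⟫ < ⟪u₀, p₀.2⟫ :=
    (innerSL ℝ u₀).lt_of_mem_interior (by simp [← norm_ne_zero_iff, hu₀]) hmax₀ hx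
  exact ⟨hK.mem_of_tendsto hlim₁ (.of_forall fun n ↦ ha (φ n)),
    hK.mem_of_tendsto hlim₂ (.of_forall fun n ↦ ha₁ (φ n)), u₀, hu₀, hmax₀, hmin₀,
    (hmin₀ x (interior_subset hx)).trans_lt hlt⟩

theorem isClosed_setOf_isOrientedAffDiamIn {X : Type*} [TopologicalSpace X] (hK : IsClosed K)
    (hKint : (interior K).Nonempty) {d : X → ℝ²} (hd : Continuous d) (hd0 : ∀ x, d x ≠ 0) :
    IsClosed {q : X × (ℝ² × ℝ²) | IsOrientedAffDiamIn K (d q.1) q.2} := by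
  have hiff : ∀ q : X × (ℝ² × ℝ²), IsOrientedAffDiamIn K (d q.1) q.2 ↔
      IsOrientedAffDiam K q.2.1 q.2.2 ∧ ‖d q.1‖ • (q.2.2 - q.2.1) = ‖q.2.2 - q.2.1‖ • d q.1 := by
    refine fun q ↦ and_congr_right fun h ↦ ?_
    rw [← sameRay_iff_norm_smul_eq, ← exists_pos_left_iff_sameRay (hd0 q.1)
      (sub_ne_zero.2 h.ne.symm)]
    simp only [eq_comm]
  simp_rw [hiff]
  exact ((isClosed_setOf_isOrientedAffDiam hK hKint).preimage continuous_snd).inter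
    (isClosed_eq (by fun_prop) (by fun_prop))

theorem continuous_cos_sin : Continuous fun α : ℝ ↦ (!₂[Real.cos α, Real.sin α] : ℝ²) := by
  fun_prop

theorem cos_sin_ne_zero (α : ℝ) : (!₂[Real.cos α, Real.sin α] : ℝ²) ≠ 0 := by
  intro h
  have hcos : Real.cos α = 0 := by simpa using congrArg (· 0) h
  have hsin : Real.sin α = 0 := by simpa using congrArg (· 1) h
  simpa [hcos, hsin] using Real.cos_sq_add_sin_sq α

end Plane

theorem oriented_affDiam_unique_continuous (K : Set (EuclideanSpace ℝ (Fin 2)))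
    (hKc : IsCompact K) (hKconv : Convex ℝ K) (hKint : (interior K).Nonempty)
    (hnp : ∀ u : EuclideanSpace ℝ (Fin 2), ‖u‖ = 1 →
      adim (suppSet K u) + adim (suppSet K (-u)) ≤ 1) :
    (∀ α : ℝ, ∃! p : EuclideanSpace ℝ (Fin 2) × EuclideanSpace ℝ (Fin 2),
      IsOrientedAffDiam K p.1 p.2 ∧
      ∃ c : ℝ, 0 < c ∧ p.2 - p.1 = c • (!₂[Real.cos α, Real.sin α] : EuclideanSpace ℝ (Fin 2))) ∧
    ∃ f : ℝ → EuclideanSpace ℝ (Fin 2) × EuclideanSpace ℝ (Fin 2), Continuous f ∧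
      ∀ α : ℝ, IsOrientedAffDiam K (f α).1 (f α).2 ∧
        ∃ c : ℝ, 0 < c ∧
          (f α).2 - (f α).1 = c • (!₂[Real.cos α, Real.sin α] : EuclideanSpace ℝ (Fin 2)) := by
  have hunique : ∀ α : ℝ, ∃! p, IsOrientedAffDiamIn K !₂[Real.cos α, Real.sin α] p :=
    fun α ↦ existsUnique_of_exists_of_unique
      (exists_isOrientedAffDiamIn hKc hKconv hKint (cos_sin_ne_zero α))
      fun _ _ hp hq ↦ hp.eq hnp hq
  choose f hf hf_unique using hunique
  refine ⟨fun α ↦ ⟨f α, hf α, hf_unique α⟩, f, ?_, hf⟩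
  refine (hKc.prod hKc).continuous_of_isClosed_graph (fun α ↦ ⟨(hf α).1.1, (hf α).1.2.1⟩) ?_
  convert isClosed_setOf_isOrientedAffDiamIn hKc.isClosed hKint continuous_cos_sin
    cos_sin_ne_zero using 1
  ext ⟨α, p⟩
  exact ⟨fun (hp : p = f α) ↦ hp ▸ hf α, hf_unique α p⟩
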